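/- arXiv:2102.12611 — 2 statements merged into one kernel-verified Lean document; each statement's English description precedes it below -/
import Mathlib

section
/- Let S be a finite nonempty set, let T ≥ 1, let X₀, X₁, …, X_T be distribution vectors on S, and let H₀, H₁, …, H_{T−1} be row-stochastic matrices on S, each with ergodicity coefficient at most γ where 0 ≤ γ < 1. For 0 ≤ i ≤ t ≤ T define H_{i:t} = H_i H_{i+1} ⋯ H_{t−1} (with H_{i:i} the identity matrix), for 1 ≤ i ≤ T define B_i = Σ_{t=1}^{i} X_t + Σ_{t=i+1}^{T} (H_{i:t})ᵀ X_i, and B₀ = Σ_{t=1}^{T} (H_{0:t})ᵀ X₀. Then for every 1 ≤ i ≤ T, ‖B_i − B_{i−1}‖₁ ≤ 2/(1 − γ). -/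
/-!
With `z = X i - (H (i-1))ᵀ X (i-1)`, the two formulas telescope to
`B i - B (i-1) = ∑_{t=i}^{T} (H_{i:t})ᵀ z`. As a difference of two distributions, `z` has sum
zero and `‖z‖₁ ≤ 2`; each `(H_{i:t})ᵀ` shrinks the `ℓ¹` norm of a zero-sum vector by at least
`γ ^ (t - i)`, and summing the geometric series gives `2 / (1 - γ)`.
-/

open Finset Matrix BigOperators

/-- The partial product `H_{i:t} = H i * H (i+1) * ⋯ * H (t-1)`, with `H_{i:i} = 1`. -/
def prodSlice {S : Type*} [Fintype S] [DecidableEq S]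
    (H : ℕ → Matrix S S ℝ) (i t : ℕ) : Matrix S S ℝ :=
  ((List.range (t - i)).map (fun j => H (i + j))).prod

lemma sum_transpose_mulVec_of_sum_row_eq_one {n R : Type*} [Fintype n] [NonAssocSemiring R]
    {M : Matrix n n R} (hM : ∀ s, ∑ s', M s s' = 1) (z : n → R) :
    ∑ s, (Mᵀ *ᵥ z) s = ∑ s, z s := by
  simp only [mulVec, dotProduct, transpose_apply]
  rw [sum_comm]
  simp only [← sum_mul, hM, one_mul]

lemma transpose_mulVec_nonneg {n : Type*} [Fintype n] {M : Matrix n n ℝ}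
    (hM : ∀ s s', 0 ≤ M s s') {x : n → ℝ} (hx : ∀ s, 0 ≤ x s) (s : n) :
    0 ≤ (Mᵀ *ᵥ x) s :=
  sum_nonneg fun s' _ => mul_nonneg (hM s' s) (hx s')

lemma sum_abs_sub_le_sum_add_sum {n : Type*} [Fintype n] {x y : n → ℝ}
    (hx : ∀ s, 0 ≤ x s) (hy : ∀ s, 0 ≤ y s) :
    ∑ s, |x s - y s| ≤ ∑ s, x s + ∑ s, y s := by
  rw [← sum_add_distrib]
  exact sum_le_sum fun s _ => abs_sub_le_iff.2 ⟨by linarith [hy s], by linarith [hx s]⟩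

lemma sum_abs_sum_apply_le {n ι : Type*} [Fintype n] (I : Finset ι) (v : ι → n → ℝ) :
    ∑ s, |(∑ t ∈ I, v t) s| ≤ ∑ t ∈ I, ∑ s, |v t s| := by
  rw [sum_comm]
  refine sum_le_sum fun s _ => ?_
  rw [Finset.sum_apply]
  exact abs_sum_le_sum_abs _ _

lemma sum_Icc_pow_sub_le {γ : ℝ} (hγ0 : 0 ≤ γ) (hγ1 : γ < 1) (i T : ℕ) :
    ∑ t ∈ Icc i T, γ ^ (t - i) ≤ 1 / (1 - γ) := by
  rw [← Ico_add_one_right_eq_Icc, sum_Ico_eq_sum_range, range_eq_Ico]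
  simpa using geom_sum_Ico_le_of_lt_one (m := 0) (n := T + 1 - i) hγ0 hγ1

section prodSlice

variable {S : Type*} [Fintype S] [DecidableEq S] (H : ℕ → Matrix S S ℝ)

lemma prodSlice_self (i : ℕ) : prodSlice H i i = 1 := by
  simp [prodSlice]

lemma prodSlice_eq_mul_prodSlice_succ {i t : ℕ} (h : i < t) :
    prodSlice H i t = H i * prodSlice H (i + 1) t := by
  obtain ⟨k, rfl⟩ : ∃ k, t = i + 1 + k := ⟨t - (i + 1), by omega⟩
  simp only [prodSlice, show i + 1 + k - i = k + 1 by omega, Nat.add_sub_cancel_left,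
    List.range_succ_eq_map, List.map_cons, List.map_map, List.prod_cons, add_zero]
  congr 3
  funext j
  simp only [Function.comp_apply, Nat.succ_eq_add_one, Nat.add_assoc, Nat.add_comm 1 j]

lemma transpose_prodSlice_mulVec {i t : ℕ} (h : i < t) (x : S → ℝ) :
    (prodSlice H i t)ᵀ *ᵥ x = (prodSlice H (i + 1) t)ᵀ *ᵥ ((H i)ᵀ *ᵥ x) := by
  rw [prodSlice_eq_mul_prodSlice_succ H h, transpose_mul, mulVec_mulVec]

lemma sum_abs_transpose_prodSlice_mulVec_le {T : ℕ} {γ : ℝ} (hγ0 : 0 ≤ γ)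
    (hrowsum : ∀ t, t < T → ∀ s, ∑ s', H t s s' = 1)
    (herg : ∀ t, t < T → ∀ z : S → ℝ, (∑ s, z s) = 0 →
      ∑ s, |(H t)ᵀ.mulVec z s| ≤ γ * ∑ s, |z s|)
    {i t : ℕ} (hit : i ≤ t) (htT : t ≤ T) {z : S → ℝ} (hz : ∑ s, z s = 0) :
    ∑ s, |((prodSlice H i t)ᵀ *ᵥ z) s| ≤ γ ^ (t - i) * ∑ s, |z s| := by
  obtain ⟨k, rfl⟩ : ∃ k, t = i + k := ⟨t - i, by omega⟩
  induction k generalizing i z with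
  | zero => simp [prodSlice_self]
  | succ k ih =>
    have hiT : i < T := by omega
    have hHz : ∑ s, ((H i)ᵀ *ᵥ z) s = 0 := by
      rw [sum_transpose_mulVec_of_sum_row_eq_one (hrowsum i hiT), hz]
    rw [transpose_prodSlice_mulVec H (by omega), show i + (k + 1) = i + 1 + k by omega]
    calc ∑ s, |((prodSlice H (i + 1) (i + 1 + k))ᵀ *ᵥ ((H i)ᵀ *ᵥ z)) s|
        ≤ γ ^ k * ∑ s, |((H i)ᵀ *ᵥ z) s| := by
          simpa only [Nat.add_sub_cancel_left] using ih hHz (by omega) (by omega)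
      _ ≤ γ ^ k * (γ * ∑ s, |z s|) := by gcongr; exact herg i hiT z hz
      _ = γ ^ (i + 1 + k - i) * ∑ s, |z s| := by
          rw [show i + 1 + k - i = k + 1 by omega, pow_succ, mul_assoc]

lemma sum_abs_sum_Icc_transpose_prodSlice_mulVec_le {T : ℕ} {γ : ℝ} (hγ0 : 0 ≤ γ) (hγ1 : γ < 1)
    (hrowsum : ∀ t, t < T → ∀ s, ∑ s', H t s s' = 1)
    (herg : ∀ t, t < T → ∀ z : S → ℝ, (∑ s, z s) = 0 →
      ∑ s, |(H t)ᵀ.mulVec z s| ≤ γ * ∑ s, |z s|)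
    (i : ℕ) {z : S → ℝ} (hz : ∑ s, z s = 0) :
    ∑ s, |(∑ t ∈ Icc i T, (prodSlice H i t)ᵀ *ᵥ z) s| ≤ (∑ s, |z s|) / (1 - γ) :=
  calc ∑ s, |(∑ t ∈ Icc i T, (prodSlice H i t)ᵀ *ᵥ z) s|
      ≤ ∑ t ∈ Icc i T, ∑ s, |((prodSlice H i t)ᵀ *ᵥ z) s| := sum_abs_sum_apply_le _ _
    _ ≤ ∑ t ∈ Icc i T, γ ^ (t - i) * ∑ s, |z s| := sum_le_sum fun t ht =>
        sum_abs_transpose_prodSlice_mulVec_le H hγ0 hrowsum herg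
          (mem_Icc.1 ht).1 (mem_Icc.1 ht).2 hz
    _ ≤ 1 / (1 - γ) * ∑ s, |z s| := by
        rw [← sum_mul]
        gcongr
        exact sum_Icc_pow_sub_le hγ0 hγ1 i T
    _ = (∑ s, |z s|) / (1 - γ) := by ring

/-- The vector `B_i` of the paper; for `i = 0` the first sum is empty, so this is also `B_0`. -/
def doobMartingale (X : ℕ → S → ℝ) (T i : ℕ) : S → ℝ :=
  ∑ t ∈ Icc 1 i, X t + ∑ t ∈ Icc (i + 1) T, (prodSlice H i t)ᵀ *ᵥ X i

lemma doobMartingale_succ_sub (X : ℕ → S → ℝ) {T j : ℕ} (hj : j + 1 ≤ T) :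
    doobMartingale H X T (j + 1) - doobMartingale H X T j =
      ∑ t ∈ Icc (j + 1) T, (prodSlice H (j + 1) t)ᵀ *ᵥ (X (j + 1) - (H j)ᵀ *ᵥ X j) := by
  have hfirst : ∑ t ∈ Icc 1 (j + 1), X t = ∑ t ∈ Icc 1 j, X t + X (j + 1) :=
    sum_Icc_succ_top (by omega) X
  have hsplit : ∑ t ∈ Icc (j + 1) T, (prodSlice H (j + 1) t)ᵀ *ᵥ X (j + 1) =
      X (j + 1) + ∑ t ∈ Icc (j + 1 + 1) T, (prodSlice H (j + 1) t)ᵀ *ᵥ X (j + 1) := by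
    rw [← insert_Icc_add_one_left_eq_Icc hj, sum_insert (by simp), prodSlice_self,
      transpose_one, one_mulVec]
  have hshift : ∑ t ∈ Icc (j + 1) T, (prodSlice H j t)ᵀ *ᵥ X j =
      ∑ t ∈ Icc (j + 1) T, (prodSlice H (j + 1) t)ᵀ *ᵥ ((H j)ᵀ *ᵥ X j) :=
    sum_congr rfl fun t ht =>
      transpose_prodSlice_mulVec H (by have := (mem_Icc.1 ht).1; omega) _
  simp only [doobMartingale, mulVec_sub, sum_sub_distrib, hfirst, hsplit, hshift]
  abel

end prodSlice

theorem doob_martingale_difference_bound_general {S : Type*} [Fintype S] [DecidableEq S]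
    (T : ℕ)
    (X : ℕ → S → ℝ)
    (hXnonneg : ∀ t, t ≤ T → ∀ s, 0 ≤ X t s)
    (hXsum : ∀ t, t ≤ T → ∑ s, X t s = 1)
    (H : ℕ → Matrix S S ℝ) (γ : ℝ) (hγ0 : 0 ≤ γ) (hγ1 : γ < 1)
    (hnonneg : ∀ t, t < T → ∀ s s', 0 ≤ H t s s')
    (hrowsum : ∀ t, t < T → ∀ s, ∑ s', H t s s' = 1)
    (herg : ∀ t, t < T → ∀ z : S → ℝ, (∑ s, z s) = 0 →
      ∑ s, |(H t)ᵀ.mulVec z s| ≤ γ * ∑ s, |z s|)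
    (B : ℕ → S → ℝ)
    (hB0 : B 0 = ∑ t ∈ Finset.Icc 1 T, ((prodSlice H 0 t)ᵀ).mulVec (X 0))
    (hBi : ∀ i, 1 ≤ i → i ≤ T →
      B i = (∑ t ∈ Finset.Icc 1 i, X t)
        + ∑ t ∈ Finset.Icc (i + 1) T, ((prodSlice H i t)ᵀ).mulVec (X i)) :
    ∀ i, 1 ≤ i → i ≤ T →
      ∑ s, |(B i - B (i - 1)) s| ≤ 2 / (1 - γ) := by
  intro i hi1 hiT
  obtain ⟨j, rfl⟩ : ∃ j, i = j + 1 := ⟨i - 1, by omega⟩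
  have hjT : j < T := by omega
  have hB : ∀ k ≤ T, B k = doobMartingale H X T k := by
    rintro (_ | k) hk
    · simp [hB0, doobMartingale]
    · exact hBi _ (by omega) hk
  set Y := (H j)ᵀ *ᵥ X j
  have hYsum : ∑ s, Y s = 1 := by
    rw [sum_transpose_mulVec_of_sum_row_eq_one (hrowsum j hjT), hXsum j hjT.le]
  have hz_sum : ∑ s, (X (j + 1) - Y) s = 0 := by
    simp only [Pi.sub_apply, sum_sub_distrib, hXsum _ hiT, hYsum, sub_self]
  have hz_norm : ∑ s, |(X (j + 1) - Y) s| ≤ 2 := by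
    have := sum_abs_sub_le_sum_add_sum (hXnonneg _ hiT)
      (transpose_mulVec_nonneg (hnonneg j hjT) (hXnonneg j hjT.le))
    rwa [hXsum _ hiT, hYsum, one_add_one_eq_two] at this
  rw [Nat.add_sub_cancel, hB _ hiT, hB j hjT.le, doobMartingale_succ_sub H X hiT]
  calc _ ≤ (∑ s, |(X (j + 1) - Y) s|) / (1 - γ) :=
        sum_abs_sum_Icc_transpose_prodSlice_mulVec_le H hγ0 hγ1 hrowsum herg _ hz_sum
    _ ≤ 2 / (1 - γ) := by gcongr

/-- Bounded differences of the Doob martingale: under uniform mixing with coefficient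
`γ < 1`, every martingale difference satisfies `‖B i - B (i-1)‖₁ ≤ 2 / (1 - γ)`. -/
theorem doob_martingale_difference_bound {S : Type*} [Fintype S] [DecidableEq S] [Nonempty S]
    (T : ℕ) (hT : 1 ≤ T)
    (X : ℕ → S → ℝ)
    (hXnonneg : ∀ t, t ≤ T → ∀ s, 0 ≤ X t s)
    (hXsum : ∀ t, t ≤ T → ∑ s, X t s = 1)
    (H : ℕ → Matrix S S ℝ) (γ : ℝ) (hγ0 : 0 ≤ γ) (hγ1 : γ < 1)
    (hnonneg : ∀ t, t < T → ∀ s s', 0 ≤ H t s s')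
    (hrowsum : ∀ t, t < T → ∀ s, ∑ s', H t s s' = 1)
    (herg : ∀ t, t < T → ∀ z : S → ℝ, (∑ s, z s) = 0 →
      ∑ s, |(H t)ᵀ.mulVec z s| ≤ γ * ∑ s, |z s|)
    (B : ℕ → S → ℝ)
    (hB0 : B 0 = ∑ t ∈ Finset.Icc 1 T, ((prodSlice H 0 t)ᵀ).mulVec (X 0))
    (hBi : ∀ i, 1 ≤ i → i ≤ T →
      B i = (∑ t ∈ Finset.Icc 1 i, X t)
        + ∑ t ∈ Finset.Icc (i + 1) T, ((prodSlice H i t)ᵀ).mulVec (X i)) :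
    ∀ i, 1 ≤ i → i ≤ T →
      ∑ s, |(B i - B (i - 1)) s| ≤ 2 / (1 - γ) :=
  doob_martingale_difference_bound_general T X hXnonneg hXsum H γ hγ0 hγ1 hnonneg hrowsum herg B hB0
    hBi
end

section
/- Let S be a finite nonempty set, let H be a row-stochastic matrix on S with ergodicity coefficient at most γ where 0 ≤ γ < 1, let ν be a stationary distribution of H (a distribution vector with Hᵀ ν = ν), and let r : S → ℝ satisfy |r(s)| ≤ 1 for all s. Set J = Σ_s ν_s r(s), Q(s) = Σ_{i=0}^{∞} ((H^i r)(s) − J), and the b-step truncation Q^b(s) = Σ_{i=0}^{b} ((H^i r)(s) − J) for a natural number b. Then for every s ∈ S, |Q(s) − Q^b(s)| ≤ 2 γ^{b+1} / (1 − γ). -/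
open Finset Matrix BigOperators

/-!
Write `(H^i r)(s) - J = ((e_s - ν) ᵥ* H^i) ⬝ᵥ r`, using that `ν` is stationary. The vector
`e_s - ν` has zero sum and `ℓ¹` norm at most `2`, and multiplying a zero-sum vector by `H`
keeps its sum zero and contracts its `ℓ¹` norm by `γ`; since `|r| ≤ 1`, the `i`-th term of `Q(s)`
is at most `2 γ^i` in absolute value. The tail of a series dominated by `2 γ^i` from index
`b + 1` on is at most `2 γ^(b+1) / (1 - γ)`.
-/

theorem norm_tsum_sub_sum_range_le_of_le_geometric {E : Type*} [NormedAddCommGroup E]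
    [CompleteSpace E] {f : ℕ → E} {C r : ℝ} (hr0 : 0 ≤ r) (hr1 : r < 1)
    (hf : ∀ i, ‖f i‖ ≤ C * r ^ i) (n : ℕ) :
    ‖∑' i, f i - ∑ i ∈ range n, f i‖ ≤ C * r ^ n / (1 - r) := by
  have hsum : Summable f :=
    .of_norm_bounded ((summable_geometric_of_lt_one hr0 hr1).mul_left C) hf
  have hstep : ∀ i, dist (∑ j ∈ range i, f j) (∑ j ∈ range (i + 1), f j) ≤ C * r ^ i := by
    intro i
    rw [dist_eq_norm, sum_range_succ, sub_add_cancel_left, norm_neg]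
    exact hf i
  rw [← dist_eq_norm, dist_comm]
  exact dist_le_of_le_geometric_of_tendsto r C hr1 hstep hsum.hasSum.tendsto_sum_nat n

namespace Matrix

variable {S : Type*} [Fintype S]

theorem sum_vecMul_of_sum_row_eq_one {R : Type*} [NonAssocSemiring R]
    {H : Matrix S S R} (hH : ∀ s, ∑ t, H s t = 1) (z : S → R) :
    ∑ t, (z ᵥ* H) t = ∑ t, z t := by
  simp only [vecMul, dotProduct]
  rw [sum_comm]
  simp only [← mul_sum, hH, mul_one]

variable [DecidableEq S]

theorem vecMul_pow_eq_self {R : Type*} [Semiring R] {H : Matrix S S R} {ν : S → R}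
    (hν : ν ᵥ* H = ν) (i : ℕ) : ν ᵥ* H ^ i = ν := by
  induction i with
  | zero => exact vecMul_one ν
  | succ i ih => rw [pow_succ, ← vecMul_vecMul, ih, hν]

theorem pow_mulVec_apply_sub_dotProduct {R : Type*} [CommRing R]
    {H : Matrix S S R} {ν : S → R} (hν : ν ᵥ* H = ν) (i : ℕ) (r : S → R) (s : S) :
    (H ^ i *ᵥ r) s - ν ⬝ᵥ r = ((Pi.single s 1 - ν) ᵥ* H ^ i) ⬝ᵥ r := by
  rw [← dotProduct_mulVec, sub_dotProduct, single_dotProduct, one_mul, dotProduct_mulVec,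
    vecMul_pow_eq_self hν]

variable {H : Matrix S S ℝ} {γ : ℝ}

theorem sum_abs_vecMul_pow_le (hH : ∀ s, ∑ t, H s t = 1) (hγ : 0 ≤ γ)
    (herg : ∀ z : S → ℝ, ∑ t, z t = 0 → ∑ t, |(z ᵥ* H) t| ≤ γ * ∑ t, |z t|) (i : ℕ)
    {z : S → ℝ} (hz : ∑ t, z t = 0) :
    ∑ t, |(z ᵥ* H ^ i) t| ≤ γ ^ i * ∑ t, |z t| := by
  induction i generalizing z with
  | zero => simp
  | succ i ih =>
    calc ∑ t, |(z ᵥ* H ^ (i + 1)) t|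
        = ∑ t, |((z ᵥ* H) ᵥ* H ^ i) t| := by rw [pow_succ', vecMul_vecMul]
      _ ≤ γ ^ i * ∑ t, |(z ᵥ* H) t| := ih (by rw [sum_vecMul_of_sum_row_eq_one hH, hz])
      _ ≤ γ ^ i * (γ * ∑ t, |z t|) := by gcongr; exact herg z hz
      _ = γ ^ (i + 1) * ∑ t, |z t| := by ring

end Matrix

theorem abs_dotProduct_le_sum_abs {S : Type*} [Fintype S] {r : S → ℝ} (hr : ∀ s, |r s| ≤ 1)
    (w : S → ℝ) : |w ⬝ᵥ r| ≤ ∑ s, |w s| :=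
  (abs_sum_le_sum_abs _ _).trans <| sum_le_sum fun s _ => by
    rw [abs_mul]
    exact mul_le_of_le_one_right (abs_nonneg _) (hr s)

theorem sum_abs_single_sub_le_two {S : Type*} [Fintype S] [DecidableEq S] {ν : S → ℝ}
    (hν0 : ∀ s, 0 ≤ ν s) (hν1 : ∑ s, ν s = 1) (s : S) :
    ∑ t, |(Pi.single s 1 - ν : S → ℝ) t| ≤ 2 := by
  have he : 0 ≤ (Pi.single s 1 : S → ℝ) := Pi.single_nonneg.2 zero_le_one
  calc ∑ t, |(Pi.single s 1 - ν : S → ℝ) t|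
      ≤ ∑ t, ((Pi.single s 1 : S → ℝ) t + ν t) := sum_le_sum fun t _ => by
        rw [Pi.sub_apply]
        refine (abs_sub _ _).trans_eq ?_
        rw [abs_of_nonneg (hν0 t), abs_of_nonneg (he t)]
    _ = 2 := by rw [sum_add_distrib, sum_pi_single', hν1]; norm_num

theorem value_function_truncation_bias_general {S : Type*} [Fintype S] [DecidableEq S]
    (H : Matrix S S ℝ) (γ : ℝ) (hγ0 : 0 ≤ γ) (hγ1 : γ < 1)
    (hrowsum : ∀ s, ∑ s', H s s' = 1)
    (herg : ∀ z : S → ℝ, (∑ s, z s) = 0 →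
      ∑ s, |Hᵀ.mulVec z s| ≤ γ * ∑ s, |z s|)
    (ν : S → ℝ) (hνnonneg : ∀ s, 0 ≤ ν s) (hνsum : ∑ s, ν s = 1)
    (hstat : Hᵀ.mulVec ν = ν)
    (r : S → ℝ) (hr : ∀ s, |r s| ≤ 1)
    (J : ℝ) (hJ : J = ∑ s, ν s * r s)
    (b : ℕ) :
    ∀ s, |(∑' i : ℕ, (((H ^ i).mulVec r) s - J))
        - ∑ i ∈ Finset.range (b + 1), (((H ^ i).mulVec r) s - J)|
      ≤ 2 * γ ^ (b + 1) / (1 - γ) := by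
  intro s
  simp only [mulVec_transpose] at herg hstat
  have hterm : ∀ i, ‖(H ^ i *ᵥ r) s - J‖ ≤ 2 * γ ^ i := fun i =>
    calc ‖(H ^ i *ᵥ r) s - J‖ = |((Pi.single s 1 - ν) ᵥ* H ^ i) ⬝ᵥ r| := by
          rw [Real.norm_eq_abs, hJ, ← pow_mulVec_apply_sub_dotProduct hstat]; rfl
      _ ≤ ∑ t, |((Pi.single s 1 - ν : S → ℝ) ᵥ* H ^ i) t| := abs_dotProduct_le_sum_abs hr _
      _ ≤ γ ^ i * ∑ t, |(Pi.single s 1 - ν : S → ℝ) t| :=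
          sum_abs_vecMul_pow_le hrowsum hγ0 herg i (by simp [hνsum])
      _ ≤ 2 * γ ^ i := by
          rw [mul_comm 2]; gcongr; exact sum_abs_single_sub_le_two hνnonneg hνsum s
  exact norm_tsum_sub_sum_range_le_of_le_geometric hγ0 hγ1 hterm (b + 1)

/-- Truncation bias of `b`-step returns: with `Q(s) = Σ_{i=0}^∞ ((H^i r)(s) - J)` and its
truncation `Q^b(s) = Σ_{i=0}^{b} ((H^i r)(s) - J)`, one has
`|Q(s) - Q^b(s)| ≤ 2 γ^{b+1} / (1 - γ)`. -/
theorem value_function_truncation_bias {S : Type*} [Fintype S] [DecidableEq S] [Nonempty S]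
    (H : Matrix S S ℝ) (γ : ℝ) (hγ0 : 0 ≤ γ) (hγ1 : γ < 1)
    (hnonneg : ∀ s s', 0 ≤ H s s')
    (hrowsum : ∀ s, ∑ s', H s s' = 1)
    (herg : ∀ z : S → ℝ, (∑ s, z s) = 0 →
      ∑ s, |Hᵀ.mulVec z s| ≤ γ * ∑ s, |z s|)
    (ν : S → ℝ) (hνnonneg : ∀ s, 0 ≤ ν s) (hνsum : ∑ s, ν s = 1)
    (hstat : Hᵀ.mulVec ν = ν)
    (r : S → ℝ) (hr : ∀ s, |r s| ≤ 1)
    (J : ℝ) (hJ : J = ∑ s, ν s * r s)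
    (b : ℕ) :
    ∀ s, |(∑' i : ℕ, (((H ^ i).mulVec r) s - J))
        - ∑ i ∈ Finset.range (b + 1), (((H ^ i).mulVec r) s - J)|
      ≤ 2 * γ ^ (b + 1) / (1 - γ) :=
  value_function_truncation_bias_general H γ hγ0 hγ1 hrowsum herg ν hνnonneg hνsum hstat r hr J hJ b
end
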